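/- arXiv:0802.0187 — 4 statements merged into one kernel-verified Lean document; each statement's English description precedes it below -/
import Mathlib

section
/- Let 0 < β < 1 and let a, b be real numbers with b ≥ a ≥ 0. Then (a+b)^{1+β} - a^{1+β} - b^{1+β} ≥ β · a · b^β. -/
/-!
Put `t = a / b ∈ [0, 1]`. Bernoulli's inequality `(1 + t) ^ (1 + β) ≥ 1 + (1 + β) t` gives
`(a + b) ^ (1 + β) ≥ b ^ (1 + β) + (1 + β) a b ^ β`, while `a ≤ b` gives
`a ^ (1 + β) = a a ^ β ≤ a b ^ β`; subtracting leaves `β a b ^ β`.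
-/

namespace Real

theorem rpow_one_add_le_mul_rpow {a b β : ℝ} (ha : 0 ≤ a) (hab : a ≤ b) (hβ : 0 ≤ β) :
    a ^ (1 + β) ≤ a * b ^ β := by
  rw [rpow_add' ha (by linarith), rpow_one]
  exact mul_le_mul_of_nonneg_left (rpow_le_rpow ha hab hβ) ha

theorem rpow_one_add_add_mul_le_add_rpow {a b β : ℝ} (ha : 0 ≤ a) (hb : 0 < b) (hβ : 0 ≤ β) :
    b ^ (1 + β) + (1 + β) * a * b ^ β ≤ (a + b) ^ (1 + β) := by
  have hbernoulli : 1 + (1 + β) * (a / b) ≤ (1 + a / b) ^ (1 + β) :=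
    one_add_mul_self_le_rpow_one_add (by linarith [div_nonneg ha hb.le]) (by linarith)
  calc b ^ (1 + β) + (1 + β) * a * b ^ β
      = (1 + (1 + β) * (a / b)) * b ^ (1 + β) := by
        rw [rpow_add hb, rpow_one]; field_simp
    _ ≤ (1 + a / b) ^ (1 + β) * b ^ (1 + β) := by gcongr
    _ = (a + b) ^ (1 + β) := by
        rw [← mul_rpow (by positivity) hb.le, add_mul, one_mul, div_mul_cancel₀ a hb.ne', add_comm]

end Real

theorem stmt_6_general (β : ℝ) (hβ0 : 0 < β)
    (a b : ℝ) (ha : 0 ≤ a) (hab : a ≤ b) :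
    β * a * b ^ β ≤ (a + b) ^ (1 + β) - a ^ (1 + β) - b ^ (1 + β) := by
  rcases (ha.trans hab).eq_or_lt with rfl | hb
  · obtain rfl : a = 0 := le_antisymm hab ha
    simp [Real.zero_rpow (by positivity : (1 : ℝ) + β ≠ 0)]
  have hlower := Real.rpow_one_add_add_mul_le_add_rpow ha hb hβ0.le
  have hupper := Real.rpow_one_add_le_mul_rpow ha hab hβ0.le
  linarith

theorem stmt_6 (β : ℝ) (hβ0 : 0 < β) (hβ1 : β < 1)
    (a b : ℝ) (ha : 0 ≤ a) (hab : a ≤ b) :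
    β * a * b ^ β ≤ (a + b) ^ (1 + β) - a ^ (1 + β) - b ^ (1 + β) :=
  stmt_6_general β hβ0 a b ha hab
end

section
/- Let 0 < β < 1, let δ be a real number with β ≤ δ ≤ 1, and let a, b ≥ 0 be real numbers. Then (a+b)^{1+β} - a^{1+β} - b^{1+β} ≤ (1+β) · a^δ · b^{1+β-δ}. -/
/-!
For `p = 1 + β`, the map `x ↦ p b^(p-1) x + x^p + b^p - (x+b)^p` vanishes at `0` and is
nondecreasing on `[0, ∞)`, since its derivative is `p (b^β + x^β - (x+b)^β) ≥ 0` by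
subadditivity of `t ↦ t^β`. This gives the bound `(1+β) a b^β`, and by symmetry `(1+β) a^β b`.
Finally `δ ↦ a^δ b^(1+β-δ)` is monotone, so on `[β, 1]` it stays above the smaller of its
endpoint values `a^β b` and `a b^β`.
-/

namespace Real

theorem add_rpow_sub_rpow_sub_rpow_le {p a b : ℝ} (hp1 : 1 ≤ p) (hp2 : p ≤ 2)
    (ha : 0 ≤ a) (hb : 0 ≤ b) :
    (a + b) ^ p - a ^ p - b ^ p ≤ p * a * b ^ (p - 1) := by
  set g : ℝ → ℝ := fun x => p * b ^ (p - 1) * x + x ^ p + b ^ p - (x + b) ^ p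
  have hg : ∀ x, HasDerivAt g (p * b ^ (p - 1) + p * x ^ (p - 1) - p * (x + b) ^ (p - 1)) x := by
    intro x
    have hpow := hasDerivAt_rpow_const (x := x) (Or.inr hp1)
    have hshift := (hasDerivAt_rpow_const (x := x + b) (Or.inr hp1)).comp x
      ((hasDerivAt_id x).add_const b)
    exact (((((hasDerivAt_id x).const_mul (p * b ^ (p - 1))).add hpow).add_const (b ^ p)).sub
      hshift).congr_deriv (by ring)
  have hmono : MonotoneOn g (Set.Ici 0) := by
    refine monotoneOn_of_hasDerivWithinAt_nonneg (convex_Ici 0)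
      (fun x _ => (hg x).continuousAt.continuousWithinAt)
      (fun x _ => (hg x).hasDerivWithinAt) fun x hx => ?_
    rw [interior_Ici, Set.mem_Ioi] at hx
    have hsub := rpow_add_le_add_rpow hx.le hb (p := p - 1) (by linarith) (by linarith)
    linarith [mul_le_mul_of_nonneg_left hsub (by linarith : 0 ≤ p)]
  have hg0 : g 0 = 0 := by simp [g, zero_rpow (by positivity : p ≠ 0)]
  have := hmono Set.self_mem_Ici ha ha
  simp only [hg0, g] at this
  linarith

theorem rpow_mul_rpow_sub_le_of_le {x y p q : ℝ} (hx : 0 ≤ x) (hy : 0 < y) (hxy : x ≤ y)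
    (hp : 0 ≤ p) (hpq : p ≤ q) (s : ℝ) :
    x ^ q * y ^ (s - q) ≤ x ^ p * y ^ (s - p) := by
  have hratio : ∀ r, x ^ r * y ^ (s - r) = y ^ s * (x / y) ^ r := fun r => by
    rw [div_rpow hx hy.le, rpow_sub hy]
    field_simp
  rw [hratio, hratio]
  exact mul_le_mul_of_nonneg_left
    (rpow_le_rpow_of_exponent_ge' (by positivity) ((div_le_one hy).2 hxy) hp hpq) (by positivity)

theorem min_le_rpow_mul_rpow {a b β δ : ℝ} (ha : 0 ≤ a) (hb : 0 ≤ b) (hβ : 0 ≤ β)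
    (hβδ : β ≤ δ) (hδ : δ ≤ 1) :
    min (a * b ^ β) (a ^ β * b) ≤ a ^ δ * b ^ (1 + β - δ) := by
  rcases le_total a b with hab | hba
  · refine min_le_left _ _ |>.trans ?_
    rcases hb.eq_or_lt with rfl | hb0
    · obtain rfl : a = 0 := le_antisymm hab ha
      simp only [zero_mul]
      positivity
    simpa using rpow_mul_rpow_sub_le_of_le ha hb0 hab (by linarith) hδ (1 + β)
  · refine min_le_right _ _ |>.trans ?_
    rcases ha.eq_or_lt with rfl | ha0
    · obtain rfl : b = 0 := le_antisymm hba hb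
      simp only [mul_zero]
      positivity
    have := rpow_mul_rpow_sub_le_of_le hb ha0 hba (by linarith) (by linarith : 1 + β - δ ≤ 1)
      (1 + β)
    simp only [rpow_one, add_sub_cancel_left, sub_sub_cancel] at this
    linarith

end Real

theorem stmt_7_general (β : ℝ) (hβ0 : 0 < β)
    (δ : ℝ) (hδ1 : β ≤ δ) (hδ2 : δ ≤ 1)
    (a b : ℝ) (ha : 0 ≤ a) (hb : 0 ≤ b) :
    (a + b) ^ (1 + β) - a ^ (1 + β) - b ^ (1 + β) ≤ (1 + β) * a ^ δ * b ^ (1 + β - δ) := by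
  have hab := Real.add_rpow_sub_rpow_sub_rpow_le (p := 1 + β) (by linarith) (by linarith) ha hb
  have hba := Real.add_rpow_sub_rpow_sub_rpow_le (p := 1 + β) (by linarith) (by linarith) hb ha
  rw [add_comm b a, add_sub_cancel_left] at hba
  rw [add_sub_cancel_left] at hab
  calc (a + b) ^ (1 + β) - a ^ (1 + β) - b ^ (1 + β)
      ≤ (1 + β) * min (a * b ^ β) (a ^ β * b) := by
        rw [mul_min_of_nonneg _ _ (by linarith)]
        exact le_min (by linarith) (by linarith)
    _ ≤ (1 + β) * (a ^ δ * b ^ (1 + β - δ)) := by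
        gcongr
        exact Real.min_le_rpow_mul_rpow ha hb hβ0.le hδ1 hδ2
    _ = (1 + β) * a ^ δ * b ^ (1 + β - δ) := by ring

theorem stmt_7 (β : ℝ) (hβ0 : 0 < β) (hβ1 : β < 1)
    (δ : ℝ) (hδ1 : β ≤ δ) (hδ2 : δ ≤ 1)
    (a b : ℝ) (ha : 0 ≤ a) (hb : 0 ≤ b) :
    (a + b) ^ (1 + β) - a ^ (1 + β) - b ^ (1 + β) ≤ (1 + β) * a ^ δ * b ^ (1 + β - δ) :=
  stmt_7_general β hβ0 δ hδ1 hδ2 a b ha hb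
end

section
/- Let d ≥ 1 be an integer, 0 < α ≤ 2, 0 < β < 1 with d < α(1+β)/β, and let p : ℝ^d → [0,∞) be measurable with ∫_{ℝ^d} p(x)^{1+β} dx < ∞. For t > 0 set p_t(x) := t^{-d/α} p(t^{-1/α} x), and for l ≥ 0 define f_l(x) := ∫_0^1 p_{l+s}(x) ds. Then there is a constant C (depending only on d, α, β and ∫ p^{1+β}) such that ∫_{ℝ^d} f_l(x)^{1+β} dx ≤ C for every l ≥ 0. -/
open MeasureTheory Set Filter
open scoped ENNReal

/-- The rescaled family `p_t(x) := t^{-d/α} p(t^{-1/α} x)` of a self-similar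
transition density profile `p`. -/
noncomputable def pSelfSim (d : ℕ) (α : ℝ) (p : EuclideanSpace ℝ (Fin d) → ℝ)
    (t : ℝ) (x : EuclideanSpace ℝ (Fin d)) : ℝ :=
  t ^ (-((d : ℝ) / α)) * p ((t ^ (-(1 / α)) : ℝ) • x)

/-!
By scaling, `∫ p_t^{1+β} = t^{-dβ/α} ∫ p^{1+β}`. Hölder's inequality in `s` against the weight
`(l+s)^γ`, `γ = (d/α)·β/(1+β)`, gives
`f_l(x)^{1+β} ≤ (∫₀¹ (l+s)^{γβ} p_{l+s}(x)^{1+β} ds) · (∫₀¹ (l+s)^{-γ} ds)^β`.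
Integrating in `x` (Tonelli) and using the scaling identity, `γβ - dβ/α = -γ` turns the first
factor into `∫₀¹ (l+s)^{-γ} ds · ∫ p^{1+β}`. Hence
`∫ f_l^{1+β} ≤ (∫₀¹ s^{-γ} ds)^{1+β} ∫ p^{1+β}`, which is finite because the dimension condition
says exactly `γ < 1`.
-/

theorem lintegral_comp_smul_of_pos {E : Type*} [NormedAddCommGroup E] [NormedSpace ℝ E]
    [MeasurableSpace E] [BorelSpace E] [FiniteDimensional ℝ E]
    (μ : Measure E) [μ.IsAddHaarMeasure]
    {g : E → ℝ≥0∞} (hg : Measurable g) {c : ℝ} (hc : 0 < c) :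
    ∫⁻ x, g (c • x) ∂μ = ENNReal.ofReal c ^ (-(Module.finrank ℝ E : ℝ)) * ∫⁻ x, g x ∂μ := by
  rw [← lintegral_map hg (measurable_const_smul c), Measure.map_addHaar_smul μ hc.ne',
    lintegral_smul_measure, abs_of_nonneg (by positivity),
    ENNReal.ofReal_inv_of_pos (by positivity), ENNReal.ofReal_pow hc.le, ← ENNReal.rpow_natCast,
    ← ENNReal.rpow_neg, smul_eq_mul]

theorem lintegral_ofReal_pSelfSim_rpow {d : ℕ} {α q t : ℝ} {p : EuclideanSpace ℝ (Fin d) → ℝ}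
    (hp : Measurable p) (hq : 0 ≤ q) (ht : 0 < t) :
    ∫⁻ x, ENNReal.ofReal (pSelfSim d α p t x) ^ q =
      ENNReal.ofReal t ^ (d / α * (1 - q)) * ∫⁻ x, ENNReal.ofReal (p x) ^ q := by
  have ht0 : ENNReal.ofReal t ≠ 0 := by simpa using ht
  have hc : ENNReal.ofReal (t ^ (-(1 / α))) = ENNReal.ofReal t ^ (-(1 / α)) :=
    (ENNReal.ofReal_rpow_of_pos ht).symm
  simp_rw [pSelfSim, ENNReal.ofReal_mul (Real.rpow_nonneg ht.le _),
    ENNReal.mul_rpow_of_nonneg _ _ hq]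
  rw [lintegral_const_mul' _ _ (ENNReal.rpow_ne_top_of_nonneg hq ENNReal.ofReal_ne_top),
    lintegral_comp_smul_of_pos volume (hp.ennreal_ofReal.pow_const q) (Real.rpow_pos_of_pos ht _),
    ← ENNReal.ofReal_rpow_of_pos ht, finrank_euclideanSpace_fin, hc, ← mul_assoc,
    ← ENNReal.rpow_mul, ← ENNReal.rpow_mul, ← ENNReal.rpow_add _ _ ht0 ENNReal.ofReal_ne_top]
  congr 2
  ring

theorem measurable_uncurry_ofReal_pSelfSim_add {d : ℕ} {α : ℝ}
    {p : EuclideanSpace ℝ (Fin d) → ℝ} (hp : Measurable p) (l : ℝ) :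
    Measurable (Function.uncurry fun x s => ENNReal.ofReal (pSelfSim d α p (l + s) x)) := by
  unfold pSelfSim Function.uncurry
  fun_prop

theorem lintegral_rpow_le_weighted_mul_lintegral_inv {X : Type*} [MeasurableSpace X]
    (μ : Measure X) {f w : X → ℝ≥0∞} (hf : AEMeasurable f μ) (hw : AEMeasurable w μ)
    (hw0 : ∀ᵐ x ∂μ, w x ≠ 0) (hwt : ∀ᵐ x ∂μ, w x ≠ ⊤) {β : ℝ} (hβ : 0 < β) :
    (∫⁻ x, f x ∂μ) ^ (1 + β) ≤ (∫⁻ x, w x ^ β * f x ^ (1 + β) ∂μ) * (∫⁻ x, (w x)⁻¹ ∂μ) ^ β := by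
  have hq : (0 : ℝ) < 1 + β := by linarith
  set a := β / (1 + β)
  have ha : a * (1 + β) = β := div_mul_cancel₀ _ hq.ne'
  have hsplit : (fun x => f x) =ᵐ[μ] fun x => (w x ^ a * f x) * w x ^ (-a) := by
    filter_upwards [hw0, hwt] with x hx0 hxt
    rw [mul_comm (w x ^ a), mul_assoc, ← ENNReal.rpow_add _ _ hx0 hxt, add_neg_cancel,
      ENNReal.rpow_zero, mul_one]
  have hfirst (x : X) : (w x ^ a * f x) ^ (1 + β) = w x ^ β * f x ^ (1 + β) := by
    rw [ENNReal.mul_rpow_of_nonneg _ _ hq.le, ← ENNReal.rpow_mul, ha]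
  have hsecond (x : X) : (w x ^ (-a)) ^ ((1 + β) / β) = (w x)⁻¹ := by
    rw [← ENNReal.rpow_mul, ← ENNReal.rpow_neg_one, neg_mul, ← mul_div_assoc, ha,
      div_self hβ.ne']
  have hconj : (1 + β).HolderConjugate ((1 + β) / β) := by
    rw [Real.holderConjugate_iff_eq_conjExponent (by linarith), add_sub_cancel_left]
  have holder := ENNReal.lintegral_mul_le_Lp_mul_Lq μ hconj
    ((hw.pow_const a).mul hf) (hw.pow_const (-a))
  simp only [Pi.mul_apply, hfirst, hsecond, one_div_div] at holder
  rw [lintegral_congr_ae hsplit]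
  calc (∫⁻ x, w x ^ a * f x * w x ^ (-a) ∂μ) ^ (1 + β)
      ≤ ((∫⁻ x, w x ^ β * f x ^ (1 + β) ∂μ) ^ (1 / (1 + β)) *
          (∫⁻ x, (w x)⁻¹ ∂μ) ^ a) ^ (1 + β) := ENNReal.rpow_le_rpow holder hq.le
    _ = (∫⁻ x, w x ^ β * f x ^ (1 + β) ∂μ) * (∫⁻ x, (w x)⁻¹ ∂μ) ^ β := by
      rw [ENNReal.mul_rpow_of_nonneg _ _ hq.le, ← ENNReal.rpow_mul, ← ENNReal.rpow_mul,
        one_div_mul_cancel hq.ne', ENNReal.rpow_one, ha]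

theorem setLIntegral_Ioc_ofReal_rpow_neg_lt_top {γ : ℝ} (hγ : γ < 1) :
    ∫⁻ s in Ioc (0 : ℝ) 1, ENNReal.ofReal s ^ (-γ) < ⊤ := by
  have hint : IntegrableOn (fun s : ℝ => s ^ (-γ)) (Ioc 0 1) := by
    rw [← intervalIntegrable_iff_integrableOn_Ioc_of_le zero_le_one]
    exact intervalIntegral.intervalIntegrable_rpow' (by linarith)
  calc ∫⁻ s in Ioc (0 : ℝ) 1, ENNReal.ofReal s ^ (-γ)
      = ∫⁻ s in Ioc (0 : ℝ) 1, ENNReal.ofReal (s ^ (-γ)) :=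
        setLIntegral_congr_fun measurableSet_Ioc fun s hs => ENNReal.ofReal_rpow_of_pos hs.1
    _ < ⊤ := hint.setLIntegral_lt_top

theorem lintegral_weighted_ofReal_pSelfSim_rpow {d : ℕ} {α β u : ℝ}
    {p : EuclideanSpace ℝ (Fin d) → ℝ} (hp : Measurable p) (hβ : 0 < β) (hu : 0 < u) :
    ∫⁻ x, (ENNReal.ofReal u ^ (d / α * (β / (1 + β)))) ^ β *
        ENNReal.ofReal (pSelfSim d α p u x) ^ (1 + β) =
      ENNReal.ofReal u ^ (-(d / α * (β / (1 + β)))) * ∫⁻ x, ENNReal.ofReal (p x) ^ (1 + β) := by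
  have hu0 : ENNReal.ofReal u ≠ 0 := by simpa using hu
  have hwt : ENNReal.ofReal u ^ (d / α * (β / (1 + β))) ≠ ⊤ := by
    simp [ENNReal.rpow_eq_top_iff, hu]
  rw [lintegral_const_mul' _ _ (ENNReal.rpow_ne_top_of_nonneg hβ.le hwt),
    lintegral_ofReal_pSelfSim_rpow hp (by linarith) hu, ← mul_assoc, ← ENNReal.rpow_mul,
    ← ENNReal.rpow_add _ _ hu0 ENNReal.ofReal_ne_top]
  congr 2
  field_simp
  ring

theorem lintegral_timeAverage_pSelfSim_rpow_le {d : ℕ} {α β l : ℝ}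
    {p : EuclideanSpace ℝ (Fin d) → ℝ} (hp : Measurable p) (hβ : 0 < β) (hl : 0 ≤ l) :
    ∫⁻ x, (∫⁻ s in Ioc (0 : ℝ) 1, ENNReal.ofReal (pSelfSim d α p (l + s) x)) ^ (1 + β) ≤
      (∫⁻ s in Ioc (0 : ℝ) 1, ENNReal.ofReal (l + s) ^ (-(d / α * (β / (1 + β))))) ^ (1 + β) *
        ∫⁻ x, ENNReal.ofReal (p x) ^ (1 + β) := by
  set γ := d / α * (β / (1 + β))
  set V := ∫⁻ s in Ioc (0 : ℝ) 1, ENNReal.ofReal (l + s) ^ (-γ)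
  set I := ∫⁻ x, ENNReal.ofReal (p x) ^ (1 + β)
  set F := fun x s => ENNReal.ofReal (pSelfSim d α p (l + s) x)
  set w := fun s : ℝ => ENNReal.ofReal (l + s) ^ γ
  have hpos : ∀ᵐ s ∂volume.restrict (Ioc (0 : ℝ) 1), 0 < l + s :=
    (ae_restrict_iff' measurableSet_Ioc).2 (ae_of_all _ fun s hs => by linarith [hs.1])
  have hw : Measurable w := by fun_prop
  have hF : Measurable (Function.uncurry F) := measurable_uncurry_ofReal_pSelfSim_add hp l
  have hG : Measurable (Function.uncurry fun x s => w s ^ β * F x s ^ (1 + β)) :=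
    ((hw.comp measurable_snd).pow_const β).mul (hF.pow_const _)
  have hGx : Measurable fun x => ∫⁻ s in Ioc (0 : ℝ) 1, w s ^ β * F x s ^ (1 + β) :=
    hG.lintegral_prod_right'
  have hwt : ∀ᵐ s ∂volume.restrict (Ioc (0 : ℝ) 1), w s ≠ ⊤ := by
    filter_upwards [hpos] with s hs
    simp [w, ENNReal.rpow_eq_top_iff, hs]
  have holder (x) : (∫⁻ s in Ioc (0 : ℝ) 1, F x s) ^ (1 + β) ≤
      (∫⁻ s in Ioc (0 : ℝ) 1, w s ^ β * F x s ^ (1 + β)) * V ^ β := by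
    have hV : V = ∫⁻ s in Ioc (0 : ℝ) 1, (w s)⁻¹ := by simp only [V, w, ENNReal.rpow_neg]
    rw [hV]
    refine lintegral_rpow_le_weighted_mul_lintegral_inv _
      (hF.comp measurable_prodMk_left).aemeasurable hw.aemeasurable ?_ hwt hβ
    filter_upwards [hpos] with s hs
    simp [w, hs]
  have hslice : ∀ s ∈ Ioc (0 : ℝ) 1, ∫⁻ x, w s ^ β * F x s ^ (1 + β) =
      ENNReal.ofReal (l + s) ^ (-γ) * I := fun s hs =>
    lintegral_weighted_ofReal_pSelfSim_rpow hp hβ (by linarith [hs.1])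
  calc ∫⁻ x, (∫⁻ s in Ioc (0 : ℝ) 1, F x s) ^ (1 + β)
      ≤ ∫⁻ x, (∫⁻ s in Ioc (0 : ℝ) 1, w s ^ β * F x s ^ (1 + β)) * V ^ β :=
        lintegral_mono holder
    _ = (∫⁻ s in Ioc (0 : ℝ) 1, ∫⁻ x, w s ^ β * F x s ^ (1 + β)) * V ^ β := by
        rw [lintegral_mul_const _ hGx, lintegral_lintegral_swap hG.aemeasurable]
    _ = V ^ (1 + β) * I := by
        rw [setLIntegral_congr_fun measurableSet_Ioc hslice, lintegral_mul_const _ (by fun_prop),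
          ENNReal.rpow_add_of_nonneg _ _ zero_le_one hβ.le, ENNReal.rpow_one]
        ring

theorem stmt_10_general (d : ℕ) (α β : ℝ) (hα0 : 0 < α)
    (hβ0 : 0 < β) (hdim : (d : ℝ) < α * (1 + β) / β)
    (p : EuclideanSpace ℝ (Fin d) → ℝ) (hpm : Measurable p) (hp0 : ∀ x, 0 ≤ p x)
    (hpint : ∫⁻ x, ENNReal.ofReal (p x ^ (1 + β)) < ⊤) :
    ∃ C : ℝ≥0∞, C < ⊤ ∧ ∀ l : ℝ, 0 ≤ l →
      ∫⁻ x, (∫⁻ s in Ioc (0 : ℝ) 1, ENNReal.ofReal (pSelfSim d α p (l + s) x)) ^ (1 + β) ≤ C := by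
  set γ := d / α * (β / (1 + β))
  have hγ0 : 0 ≤ γ := by positivity
  have hγ1 : γ < 1 := by
    rw [lt_div_iff₀ hβ0] at hdim
    calc γ = d * β / (α * (1 + β)) := by simp only [γ]; field_simp
      _ < 1 := (div_lt_one (by positivity)).2 hdim
  have hI : ∫⁻ x, ENNReal.ofReal (p x) ^ (1 + β) = ∫⁻ x, ENNReal.ofReal (p x ^ (1 + β)) :=
    lintegral_congr fun x => ENNReal.ofReal_rpow_of_nonneg (hp0 x) (by linarith)
  set V := ∫⁻ s in Ioc (0 : ℝ) 1, ENNReal.ofReal s ^ (-γ)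
  refine ⟨V ^ (1 + β) * ∫⁻ x, ENNReal.ofReal (p x ^ (1 + β)),
    ENNReal.mul_lt_top (ENNReal.rpow_lt_top_of_nonneg (by linarith)
      (setLIntegral_Ioc_ofReal_rpow_neg_lt_top hγ1).ne) hpint, fun l hl => ?_⟩
  have hshift : ∫⁻ s in Ioc (0 : ℝ) 1, ENNReal.ofReal (l + s) ^ (-γ) ≤ V := by
    refine setLIntegral_mono' measurableSet_Ioc fun s _ => ?_
    simp only [ENNReal.rpow_neg]
    gcongr
    linarith
  calc _ ≤ (∫⁻ s in Ioc (0 : ℝ) 1, ENNReal.ofReal (l + s) ^ (-γ)) ^ (1 + β) *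
        ∫⁻ x, ENNReal.ofReal (p x) ^ (1 + β) :=
      lintegral_timeAverage_pSelfSim_rpow_le hpm hβ0 hl
    _ ≤ _ := by
      rw [hI]
      gcongr

theorem stmt_10 (d : ℕ) (hd : 1 ≤ d) (α β : ℝ) (hα0 : 0 < α) (hα2 : α ≤ 2)
    (hβ0 : 0 < β) (hβ1 : β < 1) (hdim : (d : ℝ) < α * (1 + β) / β)
    (p : EuclideanSpace ℝ (Fin d) → ℝ) (hpm : Measurable p) (hp0 : ∀ x, 0 ≤ p x)
    (hpint : ∫⁻ x, ENNReal.ofReal (p x ^ (1 + β)) < ⊤) :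
    ∃ C : ℝ≥0∞, C < ⊤ ∧ ∀ l : ℝ, 0 ≤ l →
      ∫⁻ x, (∫⁻ s in Ioc (0 : ℝ) 1, ENNReal.ofReal (pSelfSim d α p (l + s) x)) ^ (1 + β) ≤ C :=
  stmt_10_general d α β hα0 hβ0 hdim p hpm hp0 hpint
end

section
/- Let d ≥ 1 be an integer, 0 < α ≤ 2, 0 < β < 1, and let p : ℝ^d → [0,∞) be measurable. For t > 0 set p_t(x) := t^{-d/α} p(t^{-1/α} x). Then for every Δ > 0 the exact scaling identity holds (as an equality in [0,∞]): ∫_0^∞ ∫_{ℝ^d} (∫_0^Δ p_{l+s}(x) ds)^{1+β} dx dl = Δ^{2+β-(d/α)β} · ∫_0^∞ ∫_{ℝ^d} (∫_0^1 p_{l+s}(x) ds)^{1+β} dx dl. -/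
/-!
The map `(l, s, x) ↦ (Δ l, Δ s, Δ^{1/α} x)` carries the `Δ`-problem to the `1`-problem:
`p_{Δ(l+s)}(Δ^{1/α} x) = Δ^{-d/α} p_{l+s}(x)` by self-similarity, and the Jacobians contribute
`Δ` for `s`, `Δ^{d/α}` for `x` and `Δ` for `l`. The power `1+β` turns the factor `Δ^{1-d/α}` of
the inner integral into `Δ^{(1-d/α)(1+β)}`, and the exponents add up to `2 + β - dβ/α`.
-/

open MeasureTheory Set Filter
open scoped ENNReal

open Module Pointwise

theorem setLIntegral_smul_set_of_pos {E : Type*} [NormedAddCommGroup E] [NormedSpace ℝ E]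
    [MeasurableSpace E] [BorelSpace E] [FiniteDimensional ℝ E] (μ : Measure E)
    [μ.IsAddHaarMeasure] (f : E → ℝ≥0∞) (s : Set E) {R : ℝ} (hR : 0 < R) :
    ∫⁻ x in R • s, f x ∂μ = ENNReal.ofReal (R ^ finrank ℝ E) * ∫⁻ x in s, f (R • x) ∂μ := by
  set e : E ≃ᵐ E := (Homeomorph.smulOfNeZero R hR.ne').toMeasurableEquiv
  have hRn : 0 < R ^ finrank ℝ E := pow_pos hR _
  have hμ : μ = ENNReal.ofReal (R ^ finrank ℝ E) • μ.map e := by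
    rw [show ⇑e = (R • ·) from rfl, Measure.map_addHaar_smul μ hR.ne', smul_smul,
      abs_of_pos (inv_pos.2 hRn), ← ENNReal.ofReal_mul hRn.le, mul_inv_cancel₀ hRn.ne',
      ENNReal.ofReal_one, one_smul]
  have hs : e ⁻¹' (R • s) = s := by
    rw [show ⇑e = (R • ·) from rfl, Set.preimage_smul₀ hR.ne', inv_smul_smul₀ hR.ne']
  conv_lhs => rw [hμ]
  rw [Measure.restrict_smul, lintegral_smul_measure, e.restrict_map, hs, lintegral_map_equiv]
  rfl

theorem lintegral_eq_mul_lintegral_comp_smul {E : Type*} [NormedAddCommGroup E] [NormedSpace ℝ E]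
    [MeasurableSpace E] [BorelSpace E] [FiniteDimensional ℝ E] (μ : Measure E)
    [μ.IsAddHaarMeasure] (f : E → ℝ≥0∞) {R : ℝ} (hR : 0 < R) :
    ∫⁻ x, f x ∂μ = ENNReal.ofReal (R ^ finrank ℝ E) * ∫⁻ x, f (R • x) ∂μ := by
  simpa [Set.smul_set_univ₀ hR.ne'] using setLIntegral_smul_set_of_pos μ f univ hR

theorem ENNReal.ofReal_mul_rpow {a : ℝ} (ha : 0 < a) (y : ℝ≥0∞) (z : ℝ) :
    (ENNReal.ofReal a * y) ^ z = ENNReal.ofReal (a ^ z) * y ^ z := by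
  rw [ENNReal.mul_rpow_eq_ite, ENNReal.ofReal_rpow_of_pos ha]
  simp [ha]

section SelfSimilar

variable {d : ℕ} {α : ℝ} {p : EuclideanSpace ℝ (Fin d) → ℝ}

theorem pSelfSim_mul_rpow_smul {c t : ℝ} (hc : 0 < c) (ht : 0 ≤ t)
    (x : EuclideanSpace ℝ (Fin d)) :
    pSelfSim d α p (c * t) (c ^ (1 / α) • x) = c ^ (-((d : ℝ) / α)) * pSelfSim d α p t x := by
  have hcancel : c ^ (-(1 / α)) * c ^ (1 / α) = 1 := by
    rw [← Real.rpow_add hc, neg_add_cancel, Real.rpow_zero]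
  have hx : (c * t) ^ (-(1 / α)) • c ^ (1 / α) • x = t ^ (-(1 / α)) • x := by
    rw [smul_smul, Real.mul_rpow hc.le ht, mul_right_comm, hcancel, one_mul]
  unfold pSelfSim
  rw [hx, Real.mul_rpow hc.le ht, mul_assoc]

theorem setLIntegral_Ioc_pSelfSim_mul_add {Δ l : ℝ} (hΔ : 0 < Δ) (hl : 0 ≤ l)
    (x : EuclideanSpace ℝ (Fin d)) :
    ∫⁻ s in Ioc 0 Δ, ENNReal.ofReal (pSelfSim d α p (Δ * l + s) (Δ ^ (1 / α) • x))
      = ENNReal.ofReal (Δ ^ (1 - (d : ℝ) / α)) *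
          ∫⁻ s in Ioc 0 1, ENNReal.ofReal (pSelfSim d α p (l + s) x) := by
  have hrescale : ∀ s ∈ Ioc (0 : ℝ) 1,
      ENNReal.ofReal (pSelfSim d α p (Δ * l + Δ • s) (Δ ^ (1 / α) • x))
        = ENNReal.ofReal (Δ ^ (-((d : ℝ) / α))) * ENNReal.ofReal (pSelfSim d α p (l + s) x) := by
    intro s hs
    rw [smul_eq_mul, ← mul_add, pSelfSim_mul_rpow_smul hΔ (by linarith [hs.1]),
      ENNReal.ofReal_mul (Real.rpow_nonneg hΔ.le _)]
  have hΔpow : Δ ^ (1 - (d : ℝ) / α) = Δ ^ finrank ℝ ℝ * Δ ^ (-((d : ℝ) / α)) := by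
    rw [sub_eq_add_neg, Real.rpow_add hΔ, Real.rpow_one, finrank_self, pow_one]
  rw [show Ioc (0 : ℝ) Δ = Δ • Ioc 0 1 by simp [LinearOrderedField.smul_Ioc hΔ],
    setLIntegral_smul_set_of_pos volume _ _ hΔ, setLIntegral_congr_fun measurableSet_Ioc hrescale,
    lintegral_const_mul' _ _ ENNReal.ofReal_ne_top, ← mul_assoc, hΔpow,
    ENNReal.ofReal_mul (by positivity)]

theorem lintegral_rpow_setLIntegral_Ioc_pSelfSim_mul_add {Δ l : ℝ} (hΔ : 0 < Δ) (hl : 0 ≤ l)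
    (r : ℝ) :
    ∫⁻ x, (∫⁻ s in Ioc 0 Δ, ENNReal.ofReal (pSelfSim d α p (Δ * l + s) x)) ^ r
      = ENNReal.ofReal (Δ ^ ((d : ℝ) / α + (1 - (d : ℝ) / α) * r)) *
          ∫⁻ x, (∫⁻ s in Ioc 0 1, ENNReal.ofReal (pSelfSim d α p (l + s) x)) ^ r := by
  have hc : 0 < Δ ^ (1 / α) := Real.rpow_pos_of_pos hΔ _
  have hdim : (Δ ^ (1 / α)) ^ finrank ℝ (EuclideanSpace ℝ (Fin d)) = Δ ^ ((d : ℝ) / α) := by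
    rw [finrank_euclideanSpace_fin, ← Real.rpow_natCast, ← Real.rpow_mul hΔ.le]
    ring_nf
  rw [lintegral_eq_mul_lintegral_comp_smul volume _ hc, hdim]
  simp_rw [setLIntegral_Ioc_pSelfSim_mul_add hΔ hl,
    ENNReal.ofReal_mul_rpow (Real.rpow_pos_of_pos hΔ _), ← Real.rpow_mul hΔ.le]
  rw [lintegral_const_mul' _ _ ENNReal.ofReal_ne_top, ← mul_assoc,
    ← ENNReal.ofReal_mul (by positivity), ← Real.rpow_add hΔ]

end SelfSimilar

theorem stmt_13_general (d : ℕ) (α β : ℝ)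
    (p : EuclideanSpace ℝ (Fin d) → ℝ)
    (Δ : ℝ) (hΔ : 0 < Δ) :
    ∫⁻ l in Ioi (0 : ℝ),
        ∫⁻ x, (∫⁻ s in Ioc (0 : ℝ) Δ, ENNReal.ofReal (pSelfSim d α p (l + s) x)) ^ (1 + β)
      = ENNReal.ofReal (Δ ^ (2 + β - ((d : ℝ) / α) * β)) *
        ∫⁻ l in Ioi (0 : ℝ),
          ∫⁻ x, (∫⁻ s in Ioc (0 : ℝ) 1, ENNReal.ofReal (pSelfSim d α p (l + s) x)) ^ (1 + β) := by
  have hexp : Δ * Δ ^ ((d : ℝ) / α + (1 - (d : ℝ) / α) * (1 + β))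
      = Δ ^ (2 + β - (d : ℝ) / α * β) := by
    rw [mul_comm, ← Real.rpow_add_one hΔ.ne']
    ring_nf
  have hIoi : Ioi (0 : ℝ) = Δ • Ioi 0 := by simp [LinearOrderedField.smul_Ioi hΔ]
  conv_lhs => rw [hIoi, setLIntegral_smul_set_of_pos volume _ _ hΔ]
  simp_rw [smul_eq_mul]
  rw [setLIntegral_congr_fun measurableSet_Ioi fun l hl =>
      lintegral_rpow_setLIntegral_Ioc_pSelfSim_mul_add hΔ hl.le (1 + β),
    lintegral_const_mul' _ _ ENNReal.ofReal_ne_top, ← mul_assoc, finrank_self, pow_one,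
    ← ENNReal.ofReal_mul hΔ.le, hexp]

theorem stmt_13 (d : ℕ) (hd : 1 ≤ d) (α β : ℝ) (hα0 : 0 < α) (hα2 : α ≤ 2)
    (hβ0 : 0 < β) (hβ1 : β < 1)
    (p : EuclideanSpace ℝ (Fin d) → ℝ) (hpm : Measurable p) (hp0 : ∀ x, 0 ≤ p x)
    (Δ : ℝ) (hΔ : 0 < Δ) :
    ∫⁻ l in Ioi (0 : ℝ),
        ∫⁻ x, (∫⁻ s in Ioc (0 : ℝ) Δ, ENNReal.ofReal (pSelfSim d α p (l + s) x)) ^ (1 + β)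
      = ENNReal.ofReal (Δ ^ (2 + β - ((d : ℝ) / α) * β)) *
        ∫⁻ l in Ioi (0 : ℝ),
          ∫⁻ x, (∫⁻ s in Ioc (0 : ℝ) 1, ENNReal.ofReal (pSelfSim d α p (l + s) x)) ^ (1 + β) :=
  stmt_13_general d α β p Δ hΔ
end
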